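/- Let (G,w) be a weighted graph. For every integral homology class a ∈ H_1(G,ℤ) there exist oriented simple circuits {C_s}_{s∈S} (not uniquely determined) such that a = Σ_{s∈S} [C_s] and ‖a‖_w = Σ_{s∈S} ‖C_s‖_w. -/

import Mathlib

noncomputable section

/-- A finite connected multigraph with a fixed orientation of each edge. -/
structure Multigraph where
  V : Type
  E : Type
  [finV : Fintype V]
  [finE : Fintype E]
  [decV : DecidableEq V]
  [decE : DecidableEq E]
  src : E → V
  tgt : E → V
  connected : ∀ u v : V, Relation.ReflTransGen
    (fun a b => ∃ e, (src e = a ∧ tgt e = b) ∨ (src e = b ∧ tgt e = a)) u v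

attribute [instance] Multigraph.finV Multigraph.finE Multigraph.decV Multigraph.decE

namespace Multigraph

variable (G : Multigraph)

/-- The simplicial boundary map `∂ : C(G,ℝ) = ℝ^E → ℝ^V`. -/
def boundary : (G.E → ℝ) →ₗ[ℝ] (G.V → ℝ) :=
  LinearMap.pi fun v =>
    ∑ e : G.E, (((if G.tgt e = v then (1 : ℝ) else 0) - (if G.src e = v then 1 else 0)) •
      LinearMap.proj e)

/-- The first real homology of `G`, as the subspace of 1-cycles in `ℝ^E`. -/
def H1 : Submodule ℝ (G.E → ℝ) := LinearMap.ker G.boundary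

/-- The weighted ℓ¹-norm on chains; its restriction to `H1` is the stable norm. -/
def wnorm (w : G.E → ℝ) (u : G.E → ℝ) : ℝ := ∑ e : G.E, w e * |u e|

/-- The stable ball: unit ball of the stable norm in `H_1(G,ℝ)`. -/
def stableBall (w : G.E → ℝ) : Set (G.E → ℝ) :=
  {u | u ∈ G.H1 ∧ G.wnorm w u ≤ 1}

/-- An oriented simple circuit of `G`: a closed oriented edge walk visiting each of its
vertices exactly once (starting point immaterial, encoded by indexing over `ZMod n`). -/
structure Circuit (G : Multigraph) where
  n : ℕ
  npos : 0 < n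
  vert : ZMod n → G.V
  edge : ZMod n → G.E
  dir : ZMod n → Bool
  vertInj : Function.Injective vert
  edgeInj : Function.Injective edge
  incid : ∀ i, (dir i = true ∧ G.src (edge i) = vert i ∧ G.tgt (edge i) = vert (i + 1)) ∨
      (dir i = false ∧ G.src (edge i) = vert (i + 1) ∧ G.tgt (edge i) = vert i)

/-- The 1-chain associated to an oriented simple circuit. -/
def Circuit.chain {G : Multigraph} (C : Circuit G) : G.E → ℝ := fun e =>
  haveI : NeZero C.n := ⟨C.npos.ne'⟩
  ∑ i : ZMod C.n, if C.edge i = e then (if C.dir i then (1 : ℝ) else -1) else 0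

/-- The `w`-length of an oriented simple circuit. -/
def Circuit.wlen {G : Multigraph} (C : Circuit G) (w : G.E → ℝ) : ℝ :=
  haveI : NeZero C.n := ⟨C.npos.ne'⟩
  ∑ i : ZMod C.n, w (C.edge i)

end Multigraph

/-!
Follow the flow of a nonzero real cycle `a`: by conservation, every vertex entered along an
edge carrying `a` can be left along another one, so the walk eventually closes up, and its first
loop is a simple circuit `C` running along `a` on each of its edges. If `a` is integral then
`|a e| ≥ 1` on the support, so `|a e| = |C e| + |(a - C) e|` edgewise and `a - C` is an integral
cycle of smaller ℓ¹-mass. Iterating gives `a = Σ C_s` with `|a e| = Σ_s |C_s e|` on every edge,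
and the weighted norms add up.
-/

namespace Function

theorem exists_mem_periodicPts {α : Type*} [Finite α] [Nonempty α] (f : α → α) :
    ∃ x, x ∈ periodicPts f := by
  obtain ⟨i, j, hij, heq⟩ :=
    Finite.exists_ne_map_eq_of_infinite fun k => f^[k] (Classical.arbitrary α)
  wlog hlt : i < j generalizing i j
  · exact this j i hij.symm heq.symm (hij.symm.lt_of_le (not_lt.mp hlt))
  refine ⟨f^[i] (Classical.arbitrary α), mk_mem_periodicPts (Nat.sub_pos_of_lt hlt) ?_⟩
  rw [IsPeriodicPt, IsFixedPt, ← iterate_add_apply, Nat.sub_add_cancel hlt.le]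
  exact heq.symm

theorem exists_injective_cycle {α : Type*} [Finite α] [Nonempty α] (f : α → α) :
    ∃ n, 0 < n ∧ ∃ x : ZMod n → α, Injective x ∧ ∀ k, x (k + 1) = f (x k) := by
  obtain ⟨x₀, hx₀⟩ := exists_mem_periodicPts f
  set n := minimalPeriod f x₀
  have hn : 0 < n := minimalPeriod_pos_of_mem_periodicPts hx₀
  have : NeZero n := ⟨hn.ne'⟩
  refine ⟨n, hn, fun k => f^[k.val] x₀, fun k l hkl => ?_, fun k => ?_⟩
  · exact ZMod.val_injective n
      (iterate_injOn_Iio_minimalPeriod (ZMod.val_lt k) (ZMod.val_lt l) hkl)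
  · have hcast : ((k.val + 1 : ℕ) : ZMod n) = k + 1 := by push_cast [ZMod.natCast_zmod_val]; rfl
    simp only [← hcast, ZMod.val_natCast]
    exact iterate_mod_minimalPeriod_eq.trans (iterate_succ_apply' f _ x₀)

end Function

namespace Multigraph

variable {G : Multigraph}

lemma boundary_apply (u : G.E → ℝ) (v : G.V) :
    G.boundary u v = ∑ e : G.E,
      ((if G.tgt e = v then (1 : ℝ) else 0) - (if G.src e = v then 1 else 0)) * u e := by
  simp [boundary, LinearMap.pi_apply, LinearMap.sum_apply, smul_eq_mul]

namespace Circuit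

variable (C : Circuit G)

lemma chain_edge [NeZero C.n] (k : ZMod C.n) :
    C.chain (C.edge k) = if C.dir k then 1 else -1 := by
  rw [chain, Finset.sum_eq_single k (fun i _ hik => if_neg (C.edgeInj.ne hik)) (by simp),
    if_pos rfl]

lemma chain_eq_zero_of_forall_ne {e : G.E} (he : ∀ k, C.edge k ≠ e) : C.chain e = 0 :=
  Finset.sum_eq_zero fun k _ => if_neg (he k)

lemma one_le_sum_abs_chain : 1 ≤ ∑ e, |C.chain e| := by
  have : NeZero C.n := ⟨C.npos.ne'⟩
  have h0 : |C.chain (C.edge 0)| = 1 := by rw [chain_edge]; split_ifs <;> simp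
  exact h0 ▸ Finset.single_le_sum (fun e _ => abs_nonneg (C.chain e)) (Finset.mem_univ _)

lemma chain_mem_H1 : C.chain ∈ G.H1 := by
  have : NeZero C.n := ⟨C.npos.ne'⟩
  refine LinearMap.mem_ker.mpr (funext fun v => ?_)
  have hstep (i : ZMod C.n) :
      ∑ e : G.E, ((if G.tgt e = v then (1 : ℝ) else 0) - (if G.src e = v then 1 else 0)) *
        (if C.edge i = e then (if C.dir i then (1 : ℝ) else -1) else 0) =
      (if C.vert (i + 1) = v then (1 : ℝ) else 0) - (if C.vert i = v then 1 else 0) := by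
    rw [Finset.sum_eq_single (C.edge i) (fun e _ he => by rw [if_neg (Ne.symm he), mul_zero])
      (by simp)]
    rcases C.incid i with ⟨hd, hs, ht⟩ | ⟨hd, hs, ht⟩ <;> simp [hd, hs, ht]
  -- the walk enters and leaves each vertex equally often
  have hshift : ∑ i : ZMod C.n, (if C.vert (i + 1) = v then (1 : ℝ) else 0) =
      ∑ i : ZMod C.n, (if C.vert i = v then (1 : ℝ) else 0) :=
    Fintype.sum_equiv (Equiv.addRight 1) _ _ fun _ => rfl
  simp only [boundary_apply, chain, Finset.mul_sum, Pi.zero_apply]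
  rw [Finset.sum_comm, Finset.sum_congr rfl fun i _ => hstep i, Finset.sum_sub_distrib, hshift,
    sub_self]

end Circuit

def Carries (a : G.E → ℝ) (e : G.E) (u v : G.V) : Prop :=
  (0 < a e ∧ G.src e = u ∧ G.tgt e = v) ∨ (a e < 0 ∧ G.tgt e = u ∧ G.src e = v)

lemma Carries.left_unique {a : G.E → ℝ} {e : G.E} {u v u' v' : G.V}
    (h : G.Carries a e u v) (h' : G.Carries a e u' v') : u = u' := by
  rcases h with ⟨ha, rfl, -⟩ | ⟨ha, rfl, -⟩ <;> rcases h' with ⟨ha', h', -⟩ | ⟨ha', h', -⟩ <;>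
    first | exact h' | linarith

/-- Flow conservation: a cycle leaves every vertex it enters. -/
lemma exists_carries_of_carries {a : G.E → ℝ} (ha : a ∈ G.H1) {e : G.E} {u v : G.V}
    (h : G.Carries a e u v) : ∃ e' w, G.Carries a e' v w := by
  by_contra! hout
  let flux (e : G.E) : ℝ :=
    ((if G.tgt e = v then (1 : ℝ) else 0) - (if G.src e = v then 1 else 0)) * a e
  have hflux_nonneg (e : G.E) : 0 ≤ flux e := by
    rcases lt_trichotomy (a e) 0 with hneg | hzero | hpos
    · have ht : G.tgt e ≠ v := fun ht => hout e _ (Or.inr ⟨hneg, ht, rfl⟩)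
      simp only [flux, if_neg ht]
      split_ifs <;> linarith
    · simp [flux, hzero]
    · have hs : G.src e ≠ v := fun hs => hout e _ (Or.inl ⟨hpos, hs, rfl⟩)
      simp only [flux, if_neg hs]
      split_ifs <;> linarith
  have hflux_pos : 0 < flux e := by
    rcases h with ⟨hpos, -, ht⟩ | ⟨hneg, -, hs⟩
    · have hs : G.src e ≠ v := fun hs => hout e _ (Or.inl ⟨hpos, hs, rfl⟩)
      simpa [flux, ht, hs] using hpos
    · have ht : G.tgt e ≠ v := fun ht => hout e _ (Or.inr ⟨hneg, ht, rfl⟩)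
      simpa [flux, ht, hs] using hneg
  have hsum : ∑ e, flux e = 0 := by
    simpa [boundary_apply] using congrFun (LinearMap.mem_ker.mp ha) v
  exact hsum.not_gt
    (Finset.sum_pos' (fun e _ => hflux_nonneg e) ⟨e, Finset.mem_univ e, hflux_pos⟩)

def Circuit.IsConformal (C : Circuit G) (a : G.E → ℝ) : Prop :=
  ∀ e, C.chain e = 0 ∨ (C.chain e = 1 ∧ 0 < a e) ∨ (C.chain e = -1 ∧ a e < 0)

lemma exists_isConformal_of_cycle {a : G.E → ℝ} {n : ℕ} (hn : 0 < n) {vert : ZMod n → G.V}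
    (hvert : Function.Injective vert) {edge : ZMod n → G.E}
    (hedge : ∀ k, G.Carries a (edge k) (vert k) (vert (k + 1))) :
    ∃ C : Circuit G, C.IsConformal a := by
  have : NeZero n := ⟨hn.ne'⟩
  let dir (k : ZMod n) : Bool := decide (0 < a (edge k))
  have hdir (k : ZMod n) :
      (dir k = true ∧ 0 < a (edge k)) ∨ (dir k = false ∧ a (edge k) < 0) := by
    rcases hedge k with ⟨h, -⟩ | ⟨h, -⟩
    · exact Or.inl ⟨decide_eq_true h, h⟩
    · exact Or.inr ⟨decide_eq_false h.not_gt, h⟩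
  have incid (k : ZMod n) :
      (dir k = true ∧ G.src (edge k) = vert k ∧ G.tgt (edge k) = vert (k + 1)) ∨
      (dir k = false ∧ G.src (edge k) = vert (k + 1) ∧ G.tgt (edge k) = vert k) := by
    rcases hedge k with ⟨h, hs, ht⟩ | ⟨h, ht, hs⟩
    · exact Or.inl ⟨decide_eq_true h, hs, ht⟩
    · exact Or.inr ⟨decide_eq_false h.not_gt, hs, ht⟩
  have edgeInj : Function.Injective edge := fun k l hkl =>
    hvert ((hedge k).left_unique (hkl ▸ hedge l))
  let C : Circuit G := ⟨n, hn, vert, edge, dir, hvert, edgeInj, incid⟩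
  refine ⟨C, fun e => ?_⟩
  by_cases he : ∃ k, edge k = e
  · obtain ⟨k, rfl⟩ := he
    have hC : C.chain (edge k) = if dir k then 1 else -1 := C.chain_edge k
    rcases hdir k with ⟨hd, h⟩ | ⟨hd, h⟩ <;> simp [hC, hd, h]
  · exact Or.inl (C.chain_eq_zero_of_forall_ne (not_exists.mp he))

theorem exists_isConformal {a : G.E → ℝ} (ha : a ∈ G.H1) (ha₀ : a ≠ 0) :
    ∃ C : Circuit G, C.IsConformal a := by
  obtain ⟨e₀, he₀⟩ : ∃ e, a e ≠ 0 := Function.ne_iff.mp ha₀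
  let Entered := {v : G.V // ∃ e u, G.Carries a e u v}
  have : Nonempty Entered := by
    rcases he₀.lt_or_gt with h | h
    · exact ⟨⟨G.src e₀, e₀, G.tgt e₀, Or.inr ⟨h, rfl, rfl⟩⟩⟩
    · exact ⟨⟨G.tgt e₀, e₀, G.src e₀, Or.inl ⟨h, rfl, rfl⟩⟩⟩
  have hleave (v : Entered) : ∃ e w, G.Carries a e v w := by
    obtain ⟨v, e, u, h⟩ := v
    exact exists_carries_of_carries ha h
  choose out next hout using hleave
  obtain ⟨n, hn, x, hx, hnext⟩ :=
    Function.exists_injective_cycle fun v : Entered => (⟨next v, out v, v, hout v⟩ : Entered)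
  refine exists_isConformal_of_cycle hn (Subtype.val_injective.comp hx) (edge := out ∘ x)
    fun k => ?_
  simpa [hnext k] using hout (x k)

lemma Circuit.IsConformal.abs_eq_abs_add_abs_sub {C : Circuit G} {a : G.E → ℝ}
    (hC : C.IsConformal a) (hint : ∀ e, ∃ z : ℤ, a e = z) (e : G.E) :
    |a e| = |C.chain e| + |a e - C.chain e| := by
  obtain ⟨z, hz⟩ := hint e
  rcases hC e with h | ⟨h, hpos⟩ | ⟨h, hneg⟩ <;> rw [h] <;> rw [hz] at *
  · simp
  · have : (1 : ℝ) ≤ z := by exact_mod_cast Int.cast_pos.mp hpos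
    rw [abs_of_pos hpos, abs_one, abs_of_nonneg (sub_nonneg.mpr this)]
    ring
  · have : (z : ℝ) ≤ -1 := by exact_mod_cast Int.le_sub_one_of_lt (Int.cast_lt_zero.mp hneg)
    rw [abs_of_neg hneg, abs_neg, abs_one, abs_of_nonpos (by linarith : (z : ℝ) - -1 ≤ 0)]
    ring

lemma Circuit.IsConformal.exists_sub_eq_intCast {C : Circuit G} {a : G.E → ℝ}
    (hC : C.IsConformal a) (hint : ∀ e, ∃ z : ℤ, a e = z) (e : G.E) :
    ∃ z : ℤ, a e - C.chain e = z := by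
  obtain ⟨z, hz⟩ := hint e
  rcases hC e with h | ⟨h, -⟩ | ⟨h, -⟩ <;> rw [h, hz]
  exacts [⟨z, sub_zero _⟩, ⟨z - 1, by push_cast; ring⟩, ⟨z + 1, by push_cast; ring⟩]

theorem exists_conformal_decomposition_of_sum_abs_le (N : ℕ) {a : G.E → ℝ} (ha : a ∈ G.H1)
    (hint : ∀ e, ∃ z : ℤ, a e = z) (hN : ∑ e, |a e| ≤ N) :
    ∃ (S : ℕ) (C : Fin S → Circuit G),
      a = ∑ s, (C s).chain ∧ ∀ e, |a e| = ∑ s, |(C s).chain e| := by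
  induction N generalizing a with
  | zero =>
    have ha₀ : a = 0 := funext fun e => abs_nonpos_iff.mp <|
      (Finset.single_le_sum (fun e _ => abs_nonneg (a e)) (Finset.mem_univ e)).trans
        (by simpa using hN)
    exact ⟨0, Fin.elim0, by simp [ha₀], by simp [ha₀]⟩
  | succ N ih =>
    rcases eq_or_ne a 0 with ha₀ | ha₀
    · exact ⟨0, Fin.elim0, by simp [ha₀], by simp [ha₀]⟩
    obtain ⟨C₀, hC₀⟩ := exists_isConformal ha ha₀
    have habs := hC₀.abs_eq_abs_add_abs_sub hint
    have hrest : ∑ e, |a e - C₀.chain e| ≤ N := by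
      have := C₀.one_le_sum_abs_chain
      simp only [habs, Finset.sum_add_distrib] at hN
      push_cast at hN
      linarith
    obtain ⟨S, C, hsum, hsum_abs⟩ :=
      ih (sub_mem ha C₀.chain_mem_H1) (hC₀.exists_sub_eq_intCast hint) hrest
    refine ⟨S + 1, Fin.cons C₀ C, ?_, fun e => ?_⟩
    · rw [Fin.sum_univ_succ, Fin.cons_zero]
      simp only [Fin.cons_succ, ← hsum, add_sub_cancel]
    · rw [Fin.sum_univ_succ, Fin.cons_zero, habs e]
      simp only [Fin.cons_succ, ← hsum_abs, Pi.sub_apply]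

end Multigraph

open Multigraph in
theorem integral_class_decomposition_into_circuits_general
    (G : Multigraph) (w : G.E → ℝ)
    (a : G.E → ℝ) (ha : a ∈ G.H1) (haint : ∀ e, ∃ z : ℤ, a e = z) :
    ∃ (S : ℕ) (C : Fin S → Multigraph.Circuit G),
      a = ∑ s : Fin S, (C s).chain ∧
      G.wnorm w a = ∑ s : Fin S, G.wnorm w (C s).chain := by
  obtain ⟨S, C, hsum, habs⟩ :=
    exists_conformal_decomposition_of_sum_abs_le ⌈∑ e, |a e|⌉₊ ha haint (Nat.le_ceil _)
  refine ⟨S, C, hsum, ?_⟩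
  simp only [wnorm, habs, Finset.mul_sum]
  exact Finset.sum_comm

open Multigraph in
/-- **Lemma A3.** For every integral homology class `a ∈ H_1(G,ℤ)` there are oriented simple
circuits `{C_s}` with `a = Σ_s [C_s]` and `‖a‖_w = Σ_s ‖C_s‖_w`. -/
theorem integral_class_decomposition_into_circuits
    (G : Multigraph) (w : G.E → ℝ) (hw : ∀ e, 0 < w e)
    (a : G.E → ℝ) (ha : a ∈ G.H1) (haint : ∀ e, ∃ z : ℤ, a e = z) :
    ∃ (S : ℕ) (C : Fin S → Multigraph.Circuit G),
      a = ∑ s : Fin S, (C s).chain ∧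
      G.wnorm w a = ∑ s : Fin S, G.wnorm w (C s).chain :=
  integral_class_decomposition_into_circuits_general G w a ha haint
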